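/- Let F be the field of 5 elements. Then the center Z = ⟨−1⟩ of the Moufang loop M_0(F) of norm-1 elements of the matrix Cayley–Dickson algebra C(F) is not a direct factor of M_0(F); that is, there is no subloop H of M_0(F) with M_0(F) = Z × H. -/

import Mathlib

noncomputable section

universe u v w

/-! ### Loop-theoretic notions.

A loop is given by a type with `Mul`, `One`, `Inv`; `IsMoufangLoop` states that these
operations make it a Moufang loop (a loop satisfying the Moufang identity; the axioms
below — unit laws, two-sided cancellation, two-sided inverses and the Moufang identity —
are equivalent to the usual definition of a Moufang loop). -/

/-- `M` with its `Mul`, `One`, `Inv` is a Moufang loop. -/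
def IsMoufangLoop (M : Type u) [Mul M] [One M] [Inv M] : Prop :=
  (∀ a : M, 1 * a = a) ∧ (∀ a : M, a * 1 = a) ∧
  (∀ a b c : M, a * b = a * c → b = c) ∧
  (∀ a b c : M, b * a = c * a → b = c) ∧
  (∀ a : M, a⁻¹ * a = 1) ∧ (∀ a : M, a * a⁻¹ = 1) ∧
  (∀ x y z : M, ((x * y) * x) * z = x * (y * (x * z)))

/-- A subloop of the loop `M`. -/
structure Subloop (M : Type u) [Mul M] [One M] [Inv M] where
  carrier : Set M
  one_mem : (1 : M) ∈ carrier
  mul_mem : ∀ {a b : M}, a ∈ carrier → b ∈ carrier → a * b ∈ carrier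
  inv_mem : ∀ {a : M}, a ∈ carrier → a⁻¹ ∈ carrier

/-- A subloop `N` is normal: `xN = Nx`, `(xN)y = x(Ny)` and `N(xy) = (Nx)y`. -/
def Subloop.IsNormal {M : Type u} [Mul M] [One M] [Inv M] (N : Subloop M) : Prop :=
  (∀ x : M, (fun n => x * n) '' N.carrier = (fun n => n * x) '' N.carrier) ∧
  (∀ x y : M, (fun n => (x * n) * y) '' N.carrier = (fun n => x * (n * y)) '' N.carrier) ∧
  (∀ x y : M, (fun n => n * (x * y)) '' N.carrier = (fun n => (n * x) * y) '' N.carrier)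

/-- A loop is simple if it has no non-trivial proper normal subloops. -/
def IsSimpleLoop (M : Type u) [Mul M] [One M] [Inv M] : Prop :=
  Nontrivial M ∧
    ∀ N : Subloop M, N.IsNormal → N.carrier = {(1 : M)} ∨ N.carrier = Set.univ

/-- Non-associativity of a multiplication. -/
def IsNonassociative (M : Type u) [Mul M] : Prop :=
  ¬ ∀ x y z : M, (x * y) * z = x * (y * z)

/-- Non-associativity of the multiplication restricted to a subset. -/
def IsNonassociativeOn {M : Type u} [Mul M] (H : Set M) : Prop :=
  ¬ ∀ x ∈ H, ∀ y ∈ H, ∀ z ∈ H, (x * y) * z = x * (y * z)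

/-- The subloop generated by a subset `S` (as a set). -/
def subloopClosure {M : Type u} [Mul M] [One M] [Inv M] (S : Set M) : Set M :=
  ⋂₀ {T : Set M | S ⊆ T ∧ (1 : M) ∈ T ∧ (∀ a ∈ T, ∀ b ∈ T, a * b ∈ T) ∧ ∀ a ∈ T, a⁻¹ ∈ T}

/-- The centre of a loop: all elements commuting and associating with all elements. -/
def loopCenter (M : Type u) [Mul M] : Set M :=
  {z : M | (∀ x : M, z * x = x * z) ∧ (∀ x y : M, (z * x) * y = z * (x * y)) ∧
    (∀ x y : M, (x * z) * y = x * (z * y)) ∧ ∀ x y : M, (x * y) * z = x * (y * z)}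

/-- The set `U(A)` of (two-sided) invertible elements of `A`. -/
def invertibles (A : Type u) [Mul A] [One A] : Set A :=
  {x : A | ∃ y : A, x * y = 1 ∧ y * x = 1}

/-- `N` is a normal subloop inside the loop given by the subset `Q` of `A`
(`xN = Nx`, `(xN)y = x(Ny)`, `N(xy) = (Nx)y` for `x, y ∈ Q`). -/
def IsNormalIn {A : Type u} [Mul A] (N Q : Set A) : Prop :=
  (∀ x ∈ Q, (fun n => x * n) '' N = (fun n => n * x) '' N) ∧
  (∀ x ∈ Q, ∀ y ∈ Q, (fun n => (x * n) * y) '' N = (fun n => x * (n * y)) '' N) ∧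
  (∀ x ∈ Q, ∀ y ∈ Q, (fun n => n * (x * y)) '' N = (fun n => (n * x) * y) '' N)

/-- An algebra (given by its multiplication) is alternative:
`x(xy) = (xx)y` and `(yx)x = y(xx)`. -/
def IsAlternative (A : Type u) [Mul A] : Prop :=
  ∀ x y : A, x * (x * y) = (x * x) * y ∧ (y * x) * x = y * (x * x)

/-! ### The matrix Cayley–Dickson (Zorn vector matrix) algebra -/

/-- The Zorn vector-matrix (matrix Cayley–Dickson) algebra over `F`:
matrices `(α₁, a₁₂; a₂₁, α₂)` with `α₁, α₂ ∈ F` and `a₁₂, a₂₁ ∈ F³`. -/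
@[ext]
structure Zorn (F : Type u) where
  a1 : F
  a2 : F
  u : Fin 3 → F
  v : Fin 3 → F

namespace Zorn

variable {F : Type u} [Field F]

/-- The dot product on `F³`. -/
def dot (x y : Fin 3 → F) : F := x 0 * y 0 + x 1 * y 1 + x 2 * y 2

/-- The cross product on `F³`. -/
def cross (x y : Fin 3 → F) : Fin 3 → F :=
  ![x 1 * y 2 - x 2 * y 1, x 2 * y 0 - x 0 * y 2, x 0 * y 1 - x 1 * y 0]

instance : Mul (Zorn F) :=
  ⟨fun x y =>
    ⟨x.a1 * y.a1 + dot x.u y.v,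
     x.a2 * y.a2 + dot x.v y.u,
     fun i => x.a1 * y.u i + y.a2 * x.u i - cross x.v y.v i,
     fun i => y.a1 * x.v i + x.a2 * y.v i + cross x.u y.u i⟩⟩

instance : One (Zorn F) := ⟨⟨1, 1, 0, 0⟩⟩
instance : Zero (Zorn F) := ⟨⟨0, 0, 0, 0⟩⟩
instance : Add (Zorn F) := ⟨fun x y => ⟨x.a1 + y.a1, x.a2 + y.a2, x.u + y.u, x.v + y.v⟩⟩
instance : Neg (Zorn F) := ⟨fun x => ⟨-x.a1, -x.a2, -x.u, -x.v⟩⟩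
instance : Sub (Zorn F) := ⟨fun x y => x + -y⟩
instance : SMul F (Zorn F) := ⟨fun c x => ⟨c * x.a1, c * x.a2, c • x.u, c • x.v⟩⟩

@[simp] theorem mul_a1 (x y : Zorn F) : (x * y).a1 = x.a1 * y.a1 + dot x.u y.v := rfl
@[simp] theorem mul_a2 (x y : Zorn F) : (x * y).a2 = x.a2 * y.a2 + dot x.v y.u := rfl
@[simp] theorem mul_u (x y : Zorn F) (i : Fin 3) :
    (x * y).u i = x.a1 * y.u i + y.a2 * x.u i - cross x.v y.v i := rfl
@[simp] theorem mul_v (x y : Zorn F) (i : Fin 3) :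
    (x * y).v i = y.a1 * x.v i + x.a2 * y.v i + cross x.u y.u i := rfl
@[simp] theorem neg_a1 (x : Zorn F) : (-x).a1 = -x.a1 := rfl
@[simp] theorem neg_a2 (x : Zorn F) : (-x).a2 = -x.a2 := rfl
@[simp] theorem neg_u (x : Zorn F) (i : Fin 3) : (-x).u i = -x.u i := rfl
@[simp] theorem neg_v (x : Zorn F) (i : Fin 3) : (-x).v i = -x.v i := rfl
@[simp] theorem one_a1 : (1 : Zorn F).a1 = 1 := rfl
@[simp] theorem one_a2 : (1 : Zorn F).a2 = 1 := rfl
@[simp] theorem one_u (i : Fin 3) : (1 : Zorn F).u i = 0 := rfl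
@[simp] theorem one_v (i : Fin 3) : (1 : Zorn F).v i = 0 := rfl

/-- The norm of the Zorn algebra: `n(a) = α₁α₂ - ⟨a₁₂, a₂₁⟩`. -/
def norm (x : Zorn F) : F := x.a1 * x.a2 - dot x.u x.v

/-- The trace of the Zorn algebra: `t(a) = α₁ + α₂`. -/
def trace (x : Zorn F) : F := x.a1 + x.a2

/-- The norm is multiplicative. -/
theorem norm_mul (x y : Zorn F) : norm (x * y) = norm x * norm y := by
  obtain ⟨a, b, u, v⟩ := x
  obtain ⟨c, d, w, z⟩ := y
  simp [norm, dot, cross]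
  ring

@[simp] theorem norm_one : norm (1 : Zorn F) = 1 := by simp [norm, dot]

@[simp] theorem norm_neg (x : Zorn F) : norm (-x) = norm x := by
  simp [norm, dot]

theorem neg_neg' (x : Zorn F) : -(-x) = x := by
  ext i <;> simp

theorem neg_mul' (x y : Zorn F) : (-x) * y = -(x * y) := by
  ext i <;> (try fin_cases i) <;> simp [dot, cross] <;> ring

theorem mul_neg' (x y : Zorn F) : x * (-y) = -(x * y) := by
  ext i <;> (try fin_cases i) <;> simp [dot, cross] <;> ring

/-- The conjugate `(α₂, -a₁₂; -a₂₁, α₁)` of an element of the Zorn algebra. -/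
def conj (x : Zorn F) : Zorn F := ⟨x.a2, x.a1, -x.u, -x.v⟩

@[simp] theorem norm_conj (x : Zorn F) : norm (conj x) = norm x := by
  simp [norm, conj, dot]; ring

theorem mul_conj (x : Zorn F) : x * conj x = norm x • 1 := by
  ext i <;> (try fin_cases i) <;> simp [conj, norm, dot, cross, HSMul.hSMul, SMul.smul] <;>
    (first | ring1 |
      (simp only [show ∀ a : F, Mul.mul a 0 = 0 from fun a => mul_zero a]; ring))

theorem conj_mul (x : Zorn F) : conj x * x = norm x • 1 := by
  ext i <;> (try fin_cases i) <;> simp [conj, norm, dot, cross, HSMul.hSMul, SMul.smul] <;>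
    (first | ring1 |
      (simp only [show ∀ a : F, Mul.mul a 0 = 0 from fun a => mul_zero a]; ring))

/-- The matrix entries of the elements of a subset `H` of the Zorn algebra. -/
def entries (H : Set (Zorn F)) : Set F :=
  {c : F | ∃ x ∈ H, c = x.a1 ∨ c = x.a2 ∨ (∃ i, c = x.u i) ∨ ∃ i, c = x.v i}

end Zorn

/-- The set `M₀(F)` of all elements of norm `1` of the Zorn algebra. -/
def M0set (F : Type u) [Field F] : Set (Zorn F) := {x : Zorn F | Zorn.norm x = 1}

/-- The Moufang loop `M₀(F)` of all elements of norm `1` of the Zorn algebra. -/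
def M0 (F : Type u) [Field F] : Type u := {x : Zorn F // Zorn.norm x = 1}

namespace M0

variable {F : Type u} [Field F]

instance : Mul (M0 F) :=
  ⟨fun x y => ⟨x.1 * y.1, by rw [Zorn.norm_mul, x.2, y.2, one_mul]⟩⟩
instance : One (M0 F) := ⟨⟨1, Zorn.norm_one⟩⟩
instance : Neg (M0 F) := ⟨fun x => ⟨-x.1, by rw [Zorn.norm_neg, x.2]⟩⟩
instance : Inv (M0 F) := ⟨fun x => ⟨Zorn.conj x.1, by rw [Zorn.norm_conj, x.2]⟩⟩

theorem neg_neg' (x : M0 F) : -(-x) = x := Subtype.ext (Zorn.neg_neg' x.1)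
theorem neg_mul' (x y : M0 F) : (-x) * y = -(x * y) := Subtype.ext (Zorn.neg_mul' x.1 y.1)
theorem mul_neg' (x y : M0 F) : x * (-y) = -(x * y) := Subtype.ext (Zorn.mul_neg' x.1 y.1)

theorem neg_conj (x : Zorn F) : Zorn.conj (-x) = -(Zorn.conj x) := by
  ext i <;> simp [Zorn.conj]

end M0

/-- The setoid on `M₀(F)` identifying `x` and `-x`; its classes are exactly the
cosets of the subloop `⟨-1⟩ = {1, -1}` generated by `-1`. -/
def mSetoid (F : Type u) [Field F] : Setoid (M0 F) where
  r x y := y = x ∨ y = -x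
  iseqv := by
    constructor
    · exact fun x => Or.inl rfl
    · rintro x y (rfl | rfl)
      · exact Or.inl rfl
      · right; rw [M0.neg_neg']
    · rintro x y z (rfl | rfl) h <;> rcases h with rfl | rfl
      · exact Or.inl rfl
      · exact Or.inr rfl
      · exact Or.inr rfl
      · left; rw [M0.neg_neg']

/-- The loop `M(F) = M₀(F)/⟨-1⟩`. -/
def Mloop (F : Type u) [Field F] : Type u := Quotient (mSetoid F)

namespace Mloop

variable {F : Type u} [Field F]

instance : Mul (Mloop F) :=
  ⟨Quotient.map₂ (· * ·) (by
    rintro x x' (rfl | rfl) y y' (rfl | rfl) <;> try dsimp only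
    · exact Or.inl rfl
    · right; rw [M0.mul_neg']
    · right; rw [M0.neg_mul']
    · left; rw [M0.neg_mul', M0.mul_neg', M0.neg_neg'])⟩

instance : One (Mloop F) := ⟨Quotient.mk _ 1⟩

instance : Inv (Mloop F) :=
  ⟨Quotient.map (·⁻¹) (by
    rintro x x' (rfl | rfl)
    · exact Or.inl rfl
    · right
      exact Subtype.ext (M0.neg_conj x.1))⟩

end Mloop
/-! ### Free Moufang loops and the alternative "loop algebra" -/

/-- `L` is a free Moufang loop (on some subset `X` of `L`). -/
def IsFreeMoufangLoop (L : Type v) [MulOneClass L] [Inv L] : Prop :=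
  IsMoufangLoop L ∧
    ∃ X : Set L, ∀ (M : Type v) [MulOneClass M] [Inv M], IsMoufangLoop M →
      ∀ f : X → M, ∃! φ : L → M,
        (∀ a b : L, φ (a * b) = φ a * φ b) ∧ ∀ x : X, φ x.1 = f x

/-- The associator `(x, y, z) = (xy)z - x(yz)` in an algebra. -/
def asc {A : Type u} [Mul A] [Sub A] (x y z : A) : A := x * y * z - x * (y * z)

section LoopAlgebra

variable (F : Type u) [Field F] (L : Type v) [MulOneClass L]

/-- The canonical embedding of the loop `L` into its loop algebra `FL`
(the free `F`-module on `L` with multiplication induced by that of `L`). -/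
def embMA : L → MonoidAlgebra F L := fun g => MonoidAlgebra.single g 1

/-- The set `{(a,b,c) + (b,a,c), (a,b,c) + (a,c,b) | a b c ∈ L}` of skew-symmetrised
associators of loop elements in the loop algebra. -/
def assocRelSet : Set (MonoidAlgebra F L) :=
  {x | ∃ a b c : L, x =
      asc (embMA F L a) (embMA F L b) (embMA F L c) +
        asc (embMA F L b) (embMA F L a) (embMA F L c)} ∪
  {x | ∃ a b c : L, x =
      asc (embMA F L a) (embMA F L b) (embMA F L c) +
        asc (embMA F L a) (embMA F L c) (embMA F L b)}

/-- The ideal `I` of the loop algebra generated by the skew-symmetrised associators. -/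
def altIdeal : TwoSidedIdeal (MonoidAlgebra F L) := TwoSidedIdeal.span (assocRelSet F L)

/-- The alternative "loop algebra" `FL/I` (denoted `FL` in the paper). -/
def LoopAlg : Type (max u v) := (altIdeal F L).ringCon.Quotient

noncomputable instance : NonAssocRing (LoopAlg F L) :=
  inferInstanceAs (NonAssocRing (altIdeal F L).ringCon.Quotient)

noncomputable instance : SMul F (LoopAlg F L) :=
  inferInstanceAs (SMul F (altIdeal F L).ringCon.Quotient)

instance : IsScalarTower F (LoopAlg F L) (LoopAlg F L) :=
  inferInstanceAs (IsScalarTower F (altIdeal F L).ringCon.Quotient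
    (altIdeal F L).ringCon.Quotient)

/-- The canonical map from `L` to the "loop algebra" `FL/I`. -/
def embLA : L → LoopAlg F L :=
  fun g => ((embMA F L g : MonoidAlgebra F L) : (altIdeal F L).ringCon.Quotient)

variable (Q : Type w) [MulOneClass Q] (p : L → Q)

/-- The ideal `ωH` of the "loop algebra" `FL` generated by the elements `1 - h`,
`h ∈ H`, where `H = ker p` for a presentation `p : L → Q` of `Q = L/H`. -/
def omegaH : TwoSidedIdeal (LoopAlg F L) :=
  TwoSidedIdeal.span {x : LoopAlg F L | ∃ h : L, p h = 1 ∧ x = 1 - embLA F L h}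

/-- The alternative algebra `F Q̄ = FL/ωH`. -/
def FQbar : Type (max u v) := (omegaH F L Q p).ringCon.Quotient

noncomputable instance : NonAssocRing (FQbar F L Q p) :=
  inferInstanceAs (NonAssocRing (omegaH F L Q p).ringCon.Quotient)

noncomputable instance : SMul F (FQbar F L Q p) :=
  inferInstanceAs (SMul F (omegaH F L Q p).ringCon.Quotient)

instance : IsScalarTower F (FQbar F L Q p) (FQbar F L Q p) :=
  inferInstanceAs (IsScalarTower F (omegaH F L Q p).ringCon.Quotient
    (omegaH F L Q p).ringCon.Quotient)

/-- The canonical map from `L` to `F Q̄ = FL/ωH`; the loop `Q̄ = L/K`,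
`K = L ∩ (1 + ωH)`, is its range. -/
def embQbar : L → FQbar F L Q p :=
  fun g => ((embLA F L g : LoopAlg F L) : (omegaH F L Q p).ringCon.Quotient)

/-- The ideal `S` of `F Q̄` generated by all proper ideals of `F Q̄`. -/
def sumProperIdeals : TwoSidedIdeal (FQbar F L Q p) :=
  TwoSidedIdeal.span
    (⋃ J ∈ {J : TwoSidedIdeal (FQbar F L Q p) | (J : Set (FQbar F L Q p)) ≠ Set.univ},
      (J : Set (FQbar F L Q p)))

/-- The simple alternative algebra `F Q̿ = F Q̄/S`. -/
def FQbarbar : Type (max u v) := (sumProperIdeals F L Q p).ringCon.Quotient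

noncomputable instance : NonAssocRing (FQbarbar F L Q p) :=
  inferInstanceAs (NonAssocRing (sumProperIdeals F L Q p).ringCon.Quotient)

noncomputable instance : SMul F (FQbarbar F L Q p) :=
  inferInstanceAs (SMul F (sumProperIdeals F L Q p).ringCon.Quotient)

instance : IsScalarTower F (FQbarbar F L Q p) (FQbarbar F L Q p) :=
  inferInstanceAs (IsScalarTower F (sumProperIdeals F L Q p).ringCon.Quotient
    (sumProperIdeals F L Q p).ringCon.Quotient)

/-- The canonical map from `L` to `F Q̿ = F Q̄/S`; the loop `Q̿` is its range. -/
def embQbb : L → FQbarbar F L Q p :=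
  fun g => ((embQbar F L Q p g : FQbar F L Q p) : (sumProperIdeals F L Q p).ringCon.Quotient)

end LoopAlgebra
instance : Fact (Nat.Prime 5) := ⟨by norm_num⟩

/-- Let `F` be the field of `5` elements. The center `Z = ⟨-1⟩ = {1, -1}`
of the Moufang loop `M₀(F)` is not a direct factor of `M₀(F)`: there is no (normal) subloop
`H` of `M₀(F)` with `M₀(F) = Z × H`. -/
theorem center_not_direct_factor :
    ¬ ∃ H : Set (Zorn (ZMod 5)),
      H ⊆ M0set (ZMod 5) ∧
      (1 : Zorn (ZMod 5)) ∈ H ∧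
      (∀ x ∈ H, ∀ y ∈ H, x * y ∈ H) ∧
      (∀ x ∈ H, ∀ y : Zorn (ZMod 5), x * y = 1 → y * x = 1 → y ∈ H) ∧
      IsNormalIn H (M0set (ZMod 5)) ∧
      (-1 : Zorn (ZMod 5)) ∉ H ∧
      ∀ x ∈ M0set (ZMod 5), ∃ h ∈ H, x = h ∨ x = -h := by
  rintro ⟨H, _hsub, _h1, hmul, _hinv, _hnorm, hneg1, hcov⟩
  -- The element x = diag(2,3) has norm 1 and x * x = -1.
  set x : Zorn (ZMod 5) := ⟨2, 3, 0, 0⟩ with hx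
  have hxM : x ∈ M0set (ZMod 5) := by
    show Zorn.norm x = 1
    simp [Zorn.norm, Zorn.dot, hx]
    decide
  have hxx : x * x = -1 := by
    ext i <;> (try fin_cases i) <;>
      simp [hx, Zorn.dot, Zorn.cross] <;> decide
  obtain ⟨h, hH, hcase⟩ := hcov x hxM
  have hhh : h * h = -1 := by
    rcases hcase with rfl | hxh
    · exact hxx
    · have : h = -x := by
        have := congrArg Neg.neg hxh
        rw [Zorn.neg_neg'] at this; exact this.symm
      rw [this, Zorn.neg_mul', Zorn.mul_neg', Zorn.neg_neg', hxx]
  exact hneg1 (hhh ▸ hmul h hH h hH)
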